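/- arXiv:2007.04803 — 5 statements merged into one kernel-verified Lean document; each statement's English description precedes it below -/
import Mathlib

section
/- Let $(t_p)_{p\geq 0}$ be a strictly increasing sequence of natural numbers and let $g$ be a measurable function on the sample space with $\mathbb{E}[|g(Y_1)|] < \infty$, where $(Y_t)_{t\geq 1}$ are i.i.d. random variables. Then for every $\delta > 1$, $\mathbb{P}\Big(\max_{0 < i \leq p} \frac{1}{t_i - t_{i-1}}\Big|\sum_{s=t_{i-1}+1}^{t_i} (g(Y_s) - \mathbb{E}[g(Y_1)])\Big| \geq t_p^{\delta}\Big) \to 0$ as $p \to \infty$. -/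
/-!
By the triangle inequality each block mean `(t_i - t_{i-1})⁻¹ |∑ (g(Y_s) - E g(Y_1))|` has
expectation at most `C = E|g(Y_1) - E g(Y_1)|`, the summands being identically distributed.
Markov's inequality and a union bound over the `p` blocks bound the probability by
`p C / t_p^δ ≤ C p^{1-δ}`, because `t_p ≥ p`; this tends to `0` since `δ > 1`.
-/

open MeasureTheory ProbabilityTheory Filter

section

variable {Ω : Type*} [MeasurableSpace Ω] {μ : Measure Ω}

theorem integral_abs_sum_le_sum_integral_abs {ι : Type*} (S : Finset ι) {f : ι → Ω → ℝ}
    (hf : ∀ i ∈ S, Integrable (f i) μ) :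
    ∫ ω, |∑ i ∈ S, f i ω| ∂μ ≤ ∑ i ∈ S, ∫ ω, |f i ω| ∂μ := by
  rw [← integral_finsetSum S fun i hi => (hf i hi).abs]
  exact integral_mono (integrable_finsetSum S hf).abs
    (integrable_finsetSum S fun i hi => (hf i hi).abs) fun ω => Finset.abs_sum_le_sum_abs _ _

theorem measure_ge_le_ofReal_integral_div [IsFiniteMeasure μ] {f : Ω → ℝ} (hf_nonneg : 0 ≤ f)
    (hf_int : Integrable f μ) {c : ℝ} (hc : 0 < c) :
    μ {ω | c ≤ f ω} ≤ ENNReal.ofReal ((∫ ω, f ω ∂μ) / c) := by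
  rw [← ofReal_measureReal]
  exact ENNReal.ofReal_le_ofReal <| (le_div_iff₀' hc).mpr <|
    mul_meas_ge_le_integral_of_nonneg (.of_forall hf_nonneg) hf_int c

theorem integral_blockMean_abs_le {Z : ℕ → Ω → ℝ} {C : ℝ} (hZ : ∀ s, Integrable (Z s) μ)
    (hC : ∀ s, ∫ ω, |Z s ω| ∂μ ≤ C) {a b : ℕ} (hab : a < b) :
    ∫ ω, 1 / ((b : ℝ) - a) * |∑ s ∈ Finset.Ioc a b, Z s ω| ∂μ ≤ C := by
  have hlen : (0 : ℝ) < (b : ℝ) - a := sub_pos.mpr (Nat.cast_lt.mpr hab)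
  rw [integral_const_mul, one_div_mul_eq_div, div_le_iff₀' hlen]
  calc ∫ ω, |∑ s ∈ Finset.Ioc a b, Z s ω| ∂μ
      ≤ ∑ s ∈ Finset.Ioc a b, ∫ ω, |Z s ω| ∂μ :=
        integral_abs_sum_le_sum_integral_abs _ fun s _ => hZ s
    _ ≤ ∑ _s ∈ Finset.Ioc a b, C := Finset.sum_le_sum fun s _ => hC s
    _ = ((b : ℝ) - a) * C := by
        rw [Finset.sum_const, Nat.card_Ioc, nsmul_eq_mul, Nat.cast_sub hab.le]

theorem measure_exists_blockMean_ge_le [IsFiniteMeasure μ] {Z : ℕ → Ω → ℝ} {C : ℝ}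
    (hZ : ∀ s, Integrable (Z s) μ) (hC : ∀ s, ∫ ω, |Z s ω| ∂μ ≤ C) {t : ℕ → ℕ} (ht : StrictMono t)
    (p : ℕ) {c : ℝ} (hc : 0 < c) :
    μ {ω | ∃ i ∈ Finset.Icc 1 p,
        c ≤ 1 / ((t i : ℝ) - t (i - 1)) * |∑ s ∈ Finset.Ioc (t (i - 1)) (t i), Z s ω|}
      ≤ p * ENNReal.ofReal (C / c) := by
  calc _ ≤ ∑ i ∈ Finset.Icc 1 p, μ {ω |
          c ≤ 1 / ((t i : ℝ) - t (i - 1)) * |∑ s ∈ Finset.Ioc (t (i - 1)) (t i), Z s ω|} := by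
        refine (measure_mono fun ω hω => ?_).trans (measure_biUnion_finset_le _ _)
        obtain ⟨i, hi, hωi⟩ := hω
        exact Set.mem_biUnion hi hωi
    _ ≤ ∑ _i ∈ Finset.Icc 1 p, ENNReal.ofReal (C / c) := by
        refine Finset.sum_le_sum fun i hi => ?_
        have hti : t (i - 1) < t i := ht (by grind)
        refine (measure_ge_le_ofReal_integral_div (fun ω => ?_) ?_ hc).trans
          (ENNReal.ofReal_le_ofReal (div_le_div_of_nonneg_right
            (integral_blockMean_abs_le hZ hC hti) hc.le))
        · have : (t (i - 1) : ℝ) < t i := Nat.cast_lt.mpr hti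
          exact mul_nonneg (one_div_nonneg.mpr (sub_nonneg.mpr this.le)) (abs_nonneg _)
        · exact ((integrable_finsetSum _ fun s _ => hZ s).abs).const_mul _
    _ = p * ENNReal.ofReal (C / c) := by simp

theorem tendsto_natCast_div_rpow_of_strictMono {t : ℕ → ℕ} (ht : StrictMono t) {δ : ℝ}
    (hδ : 1 < δ) : Tendsto (fun p : ℕ => (p : ℝ) / (t p : ℝ) ^ δ) atTop (nhds 0) := by
  have hpow : Tendsto (fun p : ℕ => (p : ℝ) ^ (1 - δ)) atTop (nhds 0) := by
    simpa only [neg_sub, Function.comp_def] using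
      (tendsto_rpow_neg_atTop (sub_pos.mpr hδ)).comp tendsto_natCast_atTop_atTop
  refine tendsto_of_tendsto_of_tendsto_of_le_of_le' tendsto_const_nhds hpow
    (.of_forall fun p => by positivity) ?_
  filter_upwards [eventually_ge_atTop 1] with p hp
  have hp0 : (0 : ℝ) < p := by exact_mod_cast hp
  calc (p : ℝ) / (t p : ℝ) ^ δ ≤ p / (p : ℝ) ^ δ := by
        gcongr
        exact_mod_cast ht.le_apply
    _ = (p : ℝ) ^ (1 - δ) := by rw [Real.rpow_sub hp0, Real.rpow_one]

end

theorem stmt_0_general {Ω 𝓨 : Type*} [MeasurableSpace Ω] [MeasurableSpace 𝓨]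
    (P : Measure Ω) [IsProbabilityMeasure P]
    (Y : ℕ → Ω → 𝓨) (hYmeas : ∀ s, Measurable (Y s))
    (hident : ∀ s, Measure.map (Y s) P = Measure.map (Y 1) P)
    (g : 𝓨 → ℝ) (hg : Measurable g)
    (hgint : Integrable (fun ω => g (Y 1 ω)) P)
    (t : ℕ → ℕ) (ht : StrictMono t)
    (δ : ℝ) (hδ : 1 < δ) :
    Tendsto (fun p =>
        P {ω | ∃ i ∈ Finset.Icc 1 p,
            ((t p : ℝ)) ^ δ ≤
              (1 / ((t i : ℝ) - (t (i - 1) : ℝ))) *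
                |∑ s ∈ Finset.Ioc (t (i - 1)) (t i), (g (Y s ω) - ∫ ω', g (Y 1 ω') ∂P)|})
      atTop (nhds 0) := by
  set m := ∫ ω, g (Y 1 ω) ∂P
  set C := ∫ ω, |g (Y 1 ω) - m| ∂P
  have hid : ∀ s, IdentDistrib (fun ω => g (Y s ω) - m) (fun ω => g (Y 1 ω) - m) P P := fun s =>
    (IdentDistrib.mk (hYmeas s).aemeasurable (hYmeas 1).aemeasurable (hident s)).comp
      (hg.sub_const m)
  have hZ : ∀ s, Integrable (fun ω => g (Y s ω) - m) P := fun s =>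
    (hid s).integrable_iff.mpr (hgint.sub (integrable_const m))
  have hC : ∀ s, ∫ ω, |g (Y s ω) - m| ∂P ≤ C := fun s =>
    ((hid s).comp measurable_abs).integral_eq.le
  have hbound : Tendsto (fun p : ℕ => ENNReal.ofReal (C * ((p : ℝ) / (t p : ℝ) ^ δ)))
      atTop (nhds 0) := by
    simpa using ENNReal.tendsto_ofReal ((tendsto_natCast_div_rpow_of_strictMono ht hδ).const_mul C)
  refine tendsto_of_tendsto_of_tendsto_of_le_of_le' tendsto_const_nhds hbound
    (.of_forall fun p => zero_le) ?_
  filter_upwards [eventually_ge_atTop 1] with p hp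
  have htp : 0 < (t p : ℝ) ^ δ := by
    have : 0 < t p := Nat.lt_of_lt_of_le hp ht.le_apply
    positivity
  calc _ ≤ p * ENNReal.ofReal (C / (t p : ℝ) ^ δ) :=
        measure_exists_blockMean_ge_le (Z := fun s ω => g (Y s ω) - m) hZ hC ht p htp
    _ = ENNReal.ofReal (C * ((p : ℝ) / (t p : ℝ) ^ δ)) := by
        rw [← ENNReal.ofReal_natCast, ← ENNReal.ofReal_mul (Nat.cast_nonneg p)]
        ring_nf

/-- For an i.i.d. sequence `(Y_t)` and an integrable function `g`, and a strictly
increasing sequence `(t_p)` of naturals, for every `δ > 1` the probability that the maximum over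
`0 < i ≤ p` of the normalized block sums `(t_i - t_{i-1})⁻¹ |∑_{s=t_{i-1}+1}^{t_i} (g(Y_s) - E[g(Y_1)])|`
exceeds `t_p ^ δ` tends to `0` as `p → ∞`. -/
theorem stmt_0 {Ω 𝓨 : Type*} [MeasurableSpace Ω] [MeasurableSpace 𝓨]
    (P : Measure Ω) [IsProbabilityMeasure P]
    (Y : ℕ → Ω → 𝓨) (hYmeas : ∀ s, Measurable (Y s))
    (hindep : iIndepFun Y P)
    (hident : ∀ s, Measure.map (Y s) P = Measure.map (Y 1) P)
    (g : 𝓨 → ℝ) (hg : Measurable g)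
    (hgint : Integrable (fun ω => g (Y 1 ω)) P)
    (t : ℕ → ℕ) (ht : StrictMono t)
    (δ : ℝ) (hδ : 1 < δ) :
    Tendsto (fun p =>
        P {ω | ∃ i ∈ Finset.Icc 1 p,
            ((t p : ℝ)) ^ δ ≤
              (1 / ((t i : ℝ) - (t (i - 1) : ℝ))) *
                |∑ s ∈ Finset.Ioc (t (i - 1)) (t i), (g (Y s ω) - ∫ ω', g (Y 1 ω') ∂P)|})
      atTop (nhds 0) :=
  stmt_0_general P Y hYmeas hident g hg hgint t ht δ hδ
end

section
/- Let $\Theta = \mathbb{R} \times [\underline{\sigma}^2, \infty)$ for some $\underline{\sigma}^2 > 0$ and for $\theta = (\mu, \sigma^2) \in \Theta$ let $f_\theta$ be the density of $\mathcal{N}(\mu, \sigma^2)$. Let $Y$ be a real random variable with $\mathbb{E}[|Y - \mu_\star|] < \infty$, and fix $\theta_\star = (\mu_\star, \sigma_\star^2) \in \Theta$. Then there exists a constant $C' < \infty$ such that for all sufficiently large $C$, $\sup_{\theta \in \Theta : \|\theta - \theta_\star\| \geq C} \mathbb{E}[f_\theta(Y)] \leq C' C^{-1/2}$. Consequently $\limsup_{C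 \to \infty} \frac{\log\big(\sup_{\theta \in \Theta: \|\theta-\theta_\star\| \geq C} \mathbb{E}[f_\theta(Y)]\big)}{\log C} \leq -\frac{1}{2}$. -/
/-
Write `θ = (μ, s)`. Pointwise `f_θ ≤ (2πs)^{-1/2}` and, since `t e^{-t²} ≤ 1`, also
`|y - μ| f_θ(y) ≤ 1`. If `‖θ - θ⋆‖ ≥ C`, then either `s ≳ C`, and the first bound gives
`E f_θ(Y) ≲ C^{-1/2}`, or `|μ - μ⋆| ≥ C / 2`, and integrating
`|μ - μ⋆| f_θ(Y) ≤ |Y - μ| f_θ(Y) + |Y - μ⋆| f_θ(Y) ≤ 1 + (2πσ̲²)^{-1/2} |Y - μ⋆|`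
gives `E f_θ(Y) ≲ 1 / C`. Conversely, at `θ = (μ⋆, σ⋆² + C)` the inequality `e^{-u²} ≥ 1 - u`
gives `E f_θ(Y) ≥ (2πs)^{-1/2} (1 - E|Y - μ⋆| / √(2s)) ≳ C^{-1/2}`. So the supremum is of exact
order `C^{-1/2}`, in particular positive, and `log sup / log C → -1/2`.
-/

open MeasureTheory Filter

/-- The Gaussian density with mean `μ` and variance `σ2`. -/
noncomputable def gaussDens (μ σ2 y : ℝ) : ℝ :=
  (Real.sqrt (2 * Real.pi * σ2))⁻¹ * Real.exp (-(y - μ) ^ 2 / (2 * σ2))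

open Real Topology

lemma mul_exp_neg_sq_le_one (t : ℝ) : t * exp (-t ^ 2) ≤ 1 := by
  rw [exp_neg, ← div_eq_mul_inv, div_le_one (exp_pos _)]
  nlinarith [add_one_le_exp (t ^ 2), sq_nonneg (t - 1)]

lemma one_sub_le_exp_neg_sq {u : ℝ} (hu : 0 ≤ u) : 1 - u ≤ exp (-u ^ 2) := by
  rcases le_total u 1 with h | h
  · nlinarith [add_one_le_exp (-u ^ 2)]
  · linarith [exp_pos (-u ^ 2)]

section Gaussian

variable {μ s y : ℝ}

lemma gaussDens_nonneg (μ s y : ℝ) : 0 ≤ gaussDens μ s y := by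
  unfold gaussDens; positivity

lemma continuous_gaussDens (μ s : ℝ) : Continuous (gaussDens μ s) := by
  unfold gaussDens; fun_prop

lemma gaussDens_eq (hs : 0 < s) :
    gaussDens μ s y = (√(2 * π * s))⁻¹ * exp (-(|y - μ| / √(2 * s)) ^ 2) := by
  rw [gaussDens, div_pow, sq_abs, sq_sqrt (by positivity), neg_div]

lemma gaussDens_le (hs : 0 < s) : gaussDens μ s y ≤ (√(2 * π * s))⁻¹ := by
  rw [gaussDens_eq hs]
  exact mul_le_of_le_one_right (by positivity) (exp_le_one_iff.mpr (by nlinarith))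

lemma gaussDens_le_of_le {σ : ℝ} (hσ : 0 < σ) (hs : σ ≤ s) :
    gaussDens μ s y ≤ (√(2 * π * σ))⁻¹ :=
  (gaussDens_le (hσ.trans_le hs)).trans <|
    inv_anti₀ (by positivity) (sqrt_le_sqrt (by gcongr))

lemma abs_sub_mul_gaussDens_le_one (hs : 0 < s) : |y - μ| * gaussDens μ s y ≤ 1 := by
  set t := |y - μ| / √(2 * s)
  have hscale : √(2 * s) * (√(2 * π * s))⁻¹ ≤ 1 := by
    rw [← div_eq_mul_inv, div_le_one (by positivity)]
    exact sqrt_le_sqrt (by nlinarith [pi_gt_three])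
  have hy : |y - μ| = √(2 * s) * t := by
    rw [mul_div_cancel₀ _ (by positivity)]
  calc |y - μ| * gaussDens μ s y
      = (√(2 * s) * (√(2 * π * s))⁻¹) * (t * exp (-t ^ 2)) := by
        rw [gaussDens_eq hs]; nth_rewrite 1 [hy]; ring
    _ ≤ 1 * 1 := by
        gcongr
        exact mul_exp_neg_sq_le_one t
    _ = 1 := one_mul 1

lemma gaussDens_ge (hs : 0 < s) :
    (√(2 * π * s))⁻¹ * (1 - |y - μ| / √(2 * s)) ≤ gaussDens μ s y := by
  rw [gaussDens_eq hs]
  gcongr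
  exact one_sub_le_exp_neg_sq (by positivity)

end Gaussian

section Expectation

variable {Ω : Type*} [MeasurableSpace Ω] {P : Measure Ω} [IsProbabilityMeasure P] {Y : Ω → ℝ}
  {μ s : ℝ}

lemma integrable_gaussDens_comp (hY : AEMeasurable Y P) (hs : 0 < s) :
    Integrable (fun ω => gaussDens μ s (Y ω)) P :=
  .of_bound ((continuous_gaussDens μ s).measurable.comp_aemeasurable hY).aestronglyMeasurable _
    (ae_of_all _ fun ω => by
      rw [norm_of_nonneg (gaussDens_nonneg _ _ _)]; exact gaussDens_le hs)

lemma integral_gaussDens_le {B : ℝ} (hB : ∀ y, gaussDens μ s y ≤ B) :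
    ∫ ω, gaussDens μ s (Y ω) ∂P ≤ B := by
  refine (le_abs_self _).trans ?_
  simpa using norm_integral_le_of_norm_le_const (μ := P) (f := fun ω => gaussDens μ s (Y ω))
    (ae_of_all _ fun ω => by rw [norm_of_nonneg (gaussDens_nonneg _ _ _)]; exact hB _)

lemma abs_sub_mul_integral_gaussDens_le (hY : AEMeasurable Y P) {m σ : ℝ}
    (hint : Integrable (fun ω => |Y ω - m|) P) (hσ : 0 < σ) (hs : σ ≤ s) :
    |μ - m| * ∫ ω, gaussDens μ s (Y ω) ∂P ≤ 1 + (√(2 * π * σ))⁻¹ * ∫ ω, |Y ω - m| ∂P := by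
  have hs0 : 0 < s := hσ.trans_le hs
  have hpoint : ∀ ω, |μ - m| * gaussDens μ s (Y ω) ≤ 1 + (√(2 * π * σ))⁻¹ * |Y ω - m| := by
    intro ω
    have hf := gaussDens_nonneg μ s (Y ω)
    calc |μ - m| * gaussDens μ s (Y ω)
        ≤ (|Y ω - μ| + |Y ω - m|) * gaussDens μ s (Y ω) := by
          gcongr; rw [abs_sub_comm (Y ω)]; exact abs_sub_le _ _ _
      _ ≤ 1 + |Y ω - m| * (√(2 * π * σ))⁻¹ := by
          rw [add_mul]
          gcongr
          · exact abs_sub_mul_gaussDens_le_one hs0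
          · exact gaussDens_le_of_le hσ hs
      _ = 1 + (√(2 * π * σ))⁻¹ * |Y ω - m| := by ring
  rw [← integral_const_mul, ← integral_const_mul]
  calc ∫ ω, |μ - m| * gaussDens μ s (Y ω) ∂P
      ≤ ∫ ω, (1 + (√(2 * π * σ))⁻¹ * |Y ω - m|) ∂P :=
        integral_mono ((integrable_gaussDens_comp hY hs0).const_mul _)
          ((integrable_const _).add (hint.const_mul _)) hpoint
    _ = 1 + ∫ ω, (√(2 * π * σ))⁻¹ * |Y ω - m| ∂P := by
        rw [integral_add (integrable_const _) (hint.const_mul _)]; simp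

lemma integral_gaussDens_ge (hY : AEMeasurable Y P) (hint : Integrable (fun ω => |Y ω - μ|) P)
    (hs : 0 < s) :
    (√(2 * π * s))⁻¹ * (1 - (∫ ω, |Y ω - μ| ∂P) / √(2 * s)) ≤ ∫ ω, gaussDens μ s (Y ω) ∂P := by
  have hlow : Integrable (fun ω => (√(2 * π * s))⁻¹ * (1 - |Y ω - μ| / √(2 * s))) P :=
    ((integrable_const 1).sub (hint.div_const _)).const_mul _
  calc (√(2 * π * s))⁻¹ * (1 - (∫ ω, |Y ω - μ| ∂P) / √(2 * s))
      = ∫ ω, (√(2 * π * s))⁻¹ * (1 - |Y ω - μ| / √(2 * s)) ∂P := by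
        rw [integral_const_mul, integral_sub (integrable_const 1) (hint.div_const _),
          integral_div]
        simp
    _ ≤ ∫ ω, gaussDens μ s (Y ω) ∂P :=
        integral_mono hlow (integrable_gaussDens_comp hY hs) fun ω => gaussDens_ge hs

end Expectation

lemma rpow_neg_one_div_two {C : ℝ} (hC : 0 ≤ C) : C ^ (-(1 : ℝ) / 2) = (√C)⁻¹ := by
  rw [neg_div, rpow_neg hC, sqrt_eq_rpow]

lemma half_le_abs_or_half_le_abs {a b C : ℝ} (h : C ≤ √(a ^ 2 + b ^ 2)) :
    C / 2 ≤ |a| ∨ C / 2 ≤ |b| := by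
  by_contra! hab
  have : √(a ^ 2 + b ^ 2) ≤ |a| + |b| :=
    (sqrt_le_left (by positivity)).mpr
      (by nlinarith [abs_nonneg a, abs_nonneg b, sq_abs a, sq_abs b])
  linarith

section FarParameters

variable {Ω : Type*} [MeasurableSpace Ω] {P : Measure Ω} [IsProbabilityMeasure P] {Y : Ω → ℝ}
  {σlb μstar σstar : ℝ}

noncomputable def supFarExpectation (P : Measure Ω) (Y : Ω → ℝ) (σlb μstar σstar C : ℝ) : ℝ :=
  sSup {x : ℝ | ∃ θ : ℝ × ℝ, σlb ≤ θ.2 ∧ C ≤ √((θ.1 - μstar) ^ 2 + (θ.2 - σstar) ^ 2) ∧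
    x = ∫ ω, gaussDens θ.1 θ.2 (Y ω) ∂P}

lemma integral_gaussDens_le_of_le_dist (hY : AEMeasurable Y P)
    (hint : Integrable (fun ω => |Y ω - μstar|) P) (hσlb : 0 < σlb) {C : ℝ}
    (hC : 4 * |σstar| + 1 ≤ C) {θ : ℝ × ℝ} (hθ : σlb ≤ θ.2)
    (hdist : C ≤ √((θ.1 - μstar) ^ 2 + (θ.2 - σstar) ^ 2)) :
    ∫ ω, gaussDens θ.1 θ.2 (Y ω) ∂P ≤
      2 * (1 + (√(2 * π * σlb))⁻¹ * ∫ ω, |Y ω - μstar| ∂P) * C ^ (-(1 : ℝ) / 2) := by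
  set K := 2 * (1 + (√(2 * π * σlb))⁻¹ * ∫ ω, |Y ω - μstar| ∂P)
  have hC1 : 1 ≤ C := by linarith [abs_nonneg σstar]
  have hK : 1 ≤ K := by
    have : 0 ≤ ∫ ω, |Y ω - μstar| ∂P := integral_nonneg fun ω => abs_nonneg _
    have : 0 ≤ (√(2 * π * σlb))⁻¹ * ∫ ω, |Y ω - μstar| ∂P := by positivity
    linarith
  rw [rpow_neg_one_div_two (by linarith)]
  rcases half_le_abs_or_half_le_abs hdist with hμ | hσ
  · have hmul := abs_sub_mul_integral_gaussDens_le (μ := θ.1) hY hint hσlb hθ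
    have hI : 0 ≤ ∫ ω, gaussDens θ.1 θ.2 (Y ω) ∂P :=
      integral_nonneg fun ω => gaussDens_nonneg _ _ _
    calc ∫ ω, gaussDens θ.1 θ.2 (Y ω) ∂P ≤ K * C⁻¹ := by
          rw [← div_eq_mul_inv, le_div_iff₀ (by linarith)]
          nlinarith
      _ ≤ K * (√C)⁻¹ := by
          gcongr
          exact (sqrt_le_left (by linarith)).mpr (by nlinarith)
  · have hθC : C / 4 ≤ θ.2 := by
      rcases le_abs.mp hσ with h | h <;> linarith [le_abs_self σstar, neg_abs_le σstar]
    calc ∫ ω, gaussDens θ.1 θ.2 (Y ω) ∂P ≤ (√(2 * π * θ.2))⁻¹ :=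
          integral_gaussDens_le fun y => gaussDens_le (hσlb.trans_le hθ)
      _ ≤ (√C)⁻¹ := by
          gcongr
          nlinarith [pi_gt_three]
      _ ≤ K * (√C)⁻¹ := le_mul_of_one_le_left (by positivity) hK

lemma exists_pos_eventually_le_supFarExpectation (hY : AEMeasurable Y P)
    (hint : Integrable (fun ω => |Y ω - μstar|) P) (hσlb : 0 < σlb) :
    ∃ c > 0, ∀ᶠ C in atTop, c * C ^ (-(1 : ℝ) / 2) ≤ supFarExpectation P Y σlb μstar σstar C := by
  set E := ∫ ω, |Y ω - μstar| ∂P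
  have hE : 0 ≤ E := integral_nonneg fun ω => abs_nonneg _
  refine ⟨(2 * √(4 * π))⁻¹, by positivity, ?_⟩
  filter_upwards [eventually_ge_atTop (|σstar| + σlb + 2 * E ^ 2)] with C hC
  have hσ := neg_abs_le σstar
  have hC0 : 0 < C := by nlinarith [abs_nonneg σstar]
  set s := σstar + C
  have hsσlb : σlb ≤ s := by nlinarith
  have hs : 0 < s := hσlb.trans_le hsσlb
  have hle : ∫ ω, gaussDens μstar s (Y ω) ∂P ≤ supFarExpectation P Y σlb μstar σstar C := by
    refine le_csSup ⟨(√(2 * π * σlb))⁻¹, ?_⟩ ⟨(μstar, s), hsσlb, by simp [s, sqrt_sq hC0.le], rfl⟩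
    rintro _ ⟨θ, hθ, -, rfl⟩
    exact integral_gaussDens_le fun y => gaussDens_le_of_le hσlb hθ
  have hbulk : E / √(2 * s) ≤ 1 / 2 := by
    have h2E : 2 * E ≤ √(2 * s) := (le_sqrt (by positivity) (by positivity)).mpr (by nlinarith)
    rw [div_le_iff₀ (by positivity)]
    linarith
  calc (2 * √(4 * π))⁻¹ * C ^ (-(1 : ℝ) / 2) = (2 * √(4 * π * C))⁻¹ := by
        rw [rpow_neg_one_div_two hC0.le, sqrt_mul (by positivity : (0 : ℝ) ≤ 4 * π) C, ← mul_inv,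
          mul_assoc]
    _ ≤ (2 * √(2 * π * s))⁻¹ := by
        gcongr (2 * √?_)⁻¹
        have : s ≤ 2 * C := by nlinarith [le_abs_self σstar]
        nlinarith [pi_pos]
    _ ≤ (√(2 * π * s))⁻¹ * (1 - E / √(2 * s)) := by
        rw [mul_inv, mul_comm]
        gcongr
        linarith
    _ ≤ supFarExpectation P Y σlb μstar σstar C := (integral_gaussDens_ge hY hint hs).trans hle

end FarParameters

lemma tendsto_log_div_log_of_le_of_le {f : ℝ → ℝ} {a c c' : ℝ} (hc : 0 < c)
    (hlow : ∀ᶠ x in atTop, c * x ^ a ≤ f x) (hup : ∀ᶠ x in atTop, f x ≤ c' * x ^ a) :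
    Tendsto (fun x => log (f x) / log x) atTop (𝓝 a) := by
  have hlim (b : ℝ) : Tendsto (fun x => log b / log x + a) atTop (𝓝 a) := by
    simpa using (tendsto_const_nhds.div_atTop tendsto_log_atTop).add_const a
  have hlog {b x : ℝ} (hb : 0 < b) (hx : 1 < x) : log (b * x ^ a) / log x = log b / log x + a := by
    rw [log_mul hb.ne' (by positivity), log_rpow (by linarith), add_div,
      mul_div_cancel_right₀ _ (log_pos hx).ne']
  have hc' : 0 < c' := by
    obtain ⟨x, hl, hu, hx⟩ := (hlow.and (hup.and (eventually_gt_atTop 0))).exists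
    exact hc.trans_le (le_of_mul_le_mul_right (hl.trans hu) (rpow_pos_of_pos hx a))
  refine tendsto_of_tendsto_of_tendsto_of_le_of_le' (hlim c) (hlim c') ?_ ?_
  · filter_upwards [hlow, eventually_gt_atTop 1] with x hx hx1
    rw [← hlog hc hx1]
    gcongr
    exact log_pos hx1 |>.le
  · filter_upwards [hlow, hup, eventually_gt_atTop 1] with x hxl hx hx1
    rw [← hlog hc' hx1]
    gcongr
    · exact log_pos hx1 |>.le
    · exact lt_of_lt_of_le (by positivity) hxl

theorem stmt_5_general {Ω : Type*} [MeasurableSpace Ω]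
    (P : Measure Ω) [IsProbabilityMeasure P]
    (Y : Ω → ℝ) (hY : Measurable Y)
    (μstar : ℝ) (hint : Integrable (fun ω => |Y ω - μstar|) P)
    (σlb : ℝ) (hσlb : 0 < σlb)
    (σstar : ℝ) :
    (∃ C' : ℝ, ∃ C₀ : ℝ, ∀ C ≥ C₀, ∀ θ : ℝ × ℝ, σlb ≤ θ.2 →
        C ≤ Real.sqrt ((θ.1 - μstar) ^ 2 + (θ.2 - σstar) ^ 2) →
        ∫ ω, gaussDens θ.1 θ.2 (Y ω) ∂P ≤ C' * C ^ (-(1 : ℝ) / 2)) ∧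
      Filter.limsup (fun C : ℝ =>
          Real.log (sSup {x : ℝ | ∃ θ : ℝ × ℝ, σlb ≤ θ.2 ∧
              C ≤ Real.sqrt ((θ.1 - μstar) ^ 2 + (θ.2 - σstar) ^ 2) ∧
              x = ∫ ω, gaussDens θ.1 θ.2 (Y ω) ∂P}) / Real.log C)
        atTop ≤ -(1 / 2) := by
  have hupper (C : ℝ) (hC : C ≥ 4 * |σstar| + 1) (θ : ℝ × ℝ) (hθ : σlb ≤ θ.2)
      (hdist : C ≤ √((θ.1 - μstar) ^ 2 + (θ.2 - σstar) ^ 2)) :=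
    integral_gaussDens_le_of_le_dist hY.aemeasurable hint hσlb hC hθ hdist
  refine ⟨⟨_, _, hupper⟩, ?_⟩
  obtain ⟨c, hc, hlow⟩ :=
    exists_pos_eventually_le_supFarExpectation (σstar := σstar) hY.aemeasurable hint hσlb
  have hsup : ∀ᶠ C in atTop, supFarExpectation P Y σlb μstar σstar C ≤
      2 * (1 + (√(2 * π * σlb))⁻¹ * ∫ ω, |Y ω - μstar| ∂P) * C ^ (-(1 : ℝ) / 2) := by
    filter_upwards [eventually_ge_atTop (4 * |σstar| + 1)] with C hC
    refine Real.sSup_le (by rintro _ ⟨θ, hθ, hdist, rfl⟩; exact hupper C hC θ hθ hdist) ?_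
    exact mul_nonneg (by positivity) (rpow_nonneg (by linarith [abs_nonneg σstar]) _)
  exact (tendsto_log_div_log_of_le_of_le hc hlow hsup).limsup_eq.trans_le (by norm_num)

/-- for the Gaussian location-scale model on `Θ = ℝ × [σ̲², ∞)` and a real random
variable `Y` with finite first moment, there is `C' < ∞` such that, for all large `C`,
`sup_{θ ∈ Θ : ‖θ-θ⋆‖ ≥ C} E[f_θ(Y)] ≤ C' C^{-1/2}`; consequently
`limsup_{C → ∞} log(sup_{θ ∈ Θ : ‖θ-θ⋆‖ ≥ C} E[f_θ(Y)]) / log C ≤ -1/2`. -/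
theorem stmt_5 {Ω : Type*} [MeasurableSpace Ω]
    (P : Measure Ω) [IsProbabilityMeasure P]
    (Y : Ω → ℝ) (hY : Measurable Y)
    (μstar : ℝ) (hint : Integrable (fun ω => |Y ω - μstar|) P)
    (σlb : ℝ) (hσlb : 0 < σlb)
    (σstar : ℝ) (hσstar : σlb ≤ σstar) :
    (∃ C' : ℝ, ∃ C₀ : ℝ, ∀ C ≥ C₀, ∀ θ : ℝ × ℝ, σlb ≤ θ.2 →
        C ≤ Real.sqrt ((θ.1 - μstar) ^ 2 + (θ.2 - σstar) ^ 2) →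
        ∫ ω, gaussDens θ.1 θ.2 (Y ω) ∂P ≤ C' * C ^ (-(1 : ℝ) / 2)) ∧
      Filter.limsup (fun C : ℝ =>
          Real.log (sSup {x : ℝ | ∃ θ : ℝ × ℝ, σlb ≤ θ.2 ∧
              C ≤ Real.sqrt ((θ.1 - μstar) ^ 2 + (θ.2 - σstar) ^ 2) ∧
              x = ∫ ω, gaussDens θ.1 θ.2 (Y ω) ∂P}) / Real.log C)
        atTop ≤ -(1 / 2) :=
  stmt_5_general P Y hY μstar hint σlb hσlb σstar
end

section
/- Let $\Theta = \mathbb{R} \times [\underline{\sigma}^2, \infty)$ with $\underline{\sigma}^2 > 0$, let $f_{(\mu,\sigma^2)}$ be the $\mathcal{N}(\mu,\sigma^2)$ density, and let $Y$ be a real random variable. For $C > 0$ let $B_{2,C} = \{(\mu,\sigma^2) \in \Theta : |\mu| \geq C\}$. Then $\mathbb{E}\big[\sup_{\theta \in B_{2,C}} \log f_\theta(Y)\big] \leq -\tfrac{1}{2}\log(2\pi\underline{\sigma}^2)\, \mathbb{P}(|Y| \geq C/2) - \tfrac{1}{2}\log(\pi C^2/2)\, \mathbb{P}(|Y| < C/2)$,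 and this upper bound tends to $-\infty$ as $C \to \infty$. -/
/-!
Write `log f_θ(y) = -½ log(2πσ²) - (y - μ)²/(2σ²)`. On `B_{2,C}` this is at most `-½ log(2πσ̲²)`,
and when `|y| < C/2` the mean is at distance `d ≥ C/2` from `y`, where maximising over `σ²` (the
maximum sits at `σ² = d²`) gives at most `-½ log(2πd²) - ½ ≤ -½ log(πC²/2)`. Integrating these two
pointwise bounds over `{|Y| ≥ C/2}` and its complement gives the inequality; the supremum is also
bounded below (take `μ = y ± C`), so it is integrable. As `C → ∞`, `P(|Y| < C/2) → 1` while
`log(πC²/2) → ∞`, so the bound tends to `-∞`.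
-/

open MeasureTheory Filter Topology

lemma log_gaussDens {σ2 : ℝ} (hσ2 : 0 < σ2) (μ y : ℝ) :
    Real.log (gaussDens μ σ2 y) =
      -(1 / 2) * Real.log (2 * Real.pi * σ2) - (y - μ) ^ 2 / (2 * σ2) := by
  unfold gaussDens
  rw [Real.log_mul (inv_ne_zero (by positivity)) (Real.exp_ne_zero _), Real.log_inv,
    Real.log_sqrt (by positivity), Real.log_exp]
  ring

lemma continuous_log_gaussDens {σ2 : ℝ} (hσ2 : 0 < σ2) (μ : ℝ) :
    Continuous fun y => Real.log (gaussDens μ σ2 y) := by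
  simp only [log_gaussDens hσ2]
  fun_prop

lemma log_gaussDens_le_of_le {s σ2 : ℝ} (hs : 0 < s) (hσ2 : s ≤ σ2) (μ y : ℝ) :
    Real.log (gaussDens μ σ2 y) ≤ -(1 / 2) * Real.log (2 * Real.pi * s) := by
  have hσ2pos : 0 < σ2 := hs.trans_le hσ2
  rw [log_gaussDens hσ2pos]
  have hlog : Real.log (2 * Real.pi * s) ≤ Real.log (2 * Real.pi * σ2) :=
    Real.log_le_log (by positivity) (by gcongr)
  have hquad : 0 ≤ (y - μ) ^ 2 / (2 * σ2) := by positivity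
  linarith

lemma log_gaussDens_le_of_le_abs_sub {d σ2 μ y : ℝ} (hd : 0 < d) (hσ2 : 0 < σ2)
    (hdist : d ≤ |y - μ|) :
    Real.log (gaussDens μ σ2 y) ≤ -(1 / 2) * Real.log (2 * Real.pi * d ^ 2) - 1 / 2 := by
  rw [log_gaussDens hσ2]
  set t := d ^ 2 / σ2
  have ht : 0 < t := by positivity
  have hsplit : Real.log (2 * Real.pi * d ^ 2) = Real.log (2 * Real.pi * σ2) + Real.log t := by
    rw [← Real.log_mul (by positivity) ht.ne']
    congr 1
    simp only [t]
    field_simp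
  have hquad : t / 2 ≤ (y - μ) ^ 2 / (2 * σ2) := by
    have : d ^ 2 ≤ (y - μ) ^ 2 := by simpa only [sq_abs] using pow_le_pow_left₀ hd.le hdist 2
    calc t / 2 = d ^ 2 / (2 * σ2) := by ring
      _ ≤ (y - μ) ^ 2 / (2 * σ2) := by gcongr
  have hlog : Real.log t ≤ t - 1 := Real.log_le_sub_one_of_pos ht
  linarith

/-- `sup_{θ ∈ B_{2,C}} log f_θ(y)` with `θ = (μ, σ²)` and `Θ = ℝ × [σlb, ∞)`. -/
noncomputable def supLogGaussDens (σlb C y : ℝ) : ℝ :=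
  ⨆ θ : {θ : ℝ × ℝ // σlb ≤ θ.2 ∧ C ≤ |θ.1|}, Real.log (gaussDens θ.1.1 θ.1.2 y)

namespace supLogGaussDens

variable {σlb C : ℝ}

instance : Nonempty {θ : ℝ × ℝ // σlb ≤ θ.2 ∧ C ≤ |θ.1|} :=
  ⟨⟨(C, σlb), le_rfl, le_abs_self C⟩⟩

lemma bddAbove (hσlb : 0 < σlb) (y : ℝ) :
    BddAbove (Set.range fun θ : {θ : ℝ × ℝ // σlb ≤ θ.2 ∧ C ≤ |θ.1|} =>
      Real.log (gaussDens θ.1.1 θ.1.2 y)) :=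
  ⟨_, Set.forall_mem_range.2 fun θ => log_gaussDens_le_of_le hσlb θ.2.1 _ _⟩

lemma le_const (hσlb : 0 < σlb) (y : ℝ) :
    supLogGaussDens σlb C y ≤ -(1 / 2) * Real.log (2 * Real.pi * σlb) :=
  ciSup_le fun θ => log_gaussDens_le_of_le hσlb θ.2.1 _ _

lemma le_of_abs_lt (hσlb : 0 < σlb) (hC : 0 < C) {y : ℝ} (hy : |y| < C / 2) :
    supLogGaussDens σlb C y ≤ -(1 / 2) * Real.log (Real.pi * C ^ 2 / 2) := by
  refine ciSup_le fun θ => ?_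
  have hdist : C / 2 ≤ |y - θ.1.1| := by
    have := abs_sub_abs_le_abs_sub θ.1.1 y
    rw [abs_sub_comm] at this
    linarith [θ.2.2]
  have := log_gaussDens_le_of_le_abs_sub (by positivity) (hσlb.trans_le θ.2.1) hdist
  have hconst : 2 * Real.pi * (C / 2) ^ 2 = Real.pi * C ^ 2 / 2 := by ring
  rw [hconst] at this
  linarith

lemma const_le (hσlb : 0 < σlb) (y : ℝ) :
    -(1 / 2) * Real.log (2 * Real.pi * σlb) - C ^ 2 / (2 * σlb) ≤ supLogGaussDens σlb C y := by
  set μ := if 0 ≤ y then y + C else y - C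
  have hμ : C ≤ |μ| := by
    unfold μ
    split_ifs with hy
    · exact le_abs.2 (Or.inl (by linarith))
    · exact le_abs.2 (Or.inr (by linarith))
  have hdist : (y - μ) ^ 2 = C ^ 2 := by
    unfold μ
    split_ifs <;> ring
  calc -(1 / 2) * Real.log (2 * Real.pi * σlb) - C ^ 2 / (2 * σlb)
      = Real.log (gaussDens μ σlb y) := by rw [log_gaussDens hσlb, hdist]
    _ ≤ supLogGaussDens σlb C y := le_ciSup (bddAbove hσlb y) ⟨(μ, σlb), le_rfl, hμ⟩

lemma measurable (hσlb : 0 < σlb) : Measurable (supLogGaussDens σlb C) :=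
  (lowerSemicontinuous_ciSup (bddAbove hσlb) fun θ =>
    (continuous_log_gaussDens (hσlb.trans_le θ.2.1) _).lowerSemicontinuous).measurable

lemma integrable_comp {Ω : Type*} [MeasurableSpace Ω] {P : Measure Ω} [IsFiniteMeasure P]
    {Y : Ω → ℝ} (hY : Measurable Y) (hσlb : 0 < σlb) :
    Integrable (fun ω => supLogGaussDens σlb C (Y ω)) P :=
  .of_bound ((measurable hσlb).comp hY).aestronglyMeasurable _ <| ae_of_all _ fun ω =>
    abs_le_max_abs_abs (const_le hσlb (Y ω)) (le_const hσlb (Y ω))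

end supLogGaussDens

section Probability

variable {Ω : Type*} [MeasurableSpace Ω]

lemma integral_le_of_le_of_le_compl {μ : Measure Ω} [IsFiniteMeasure μ] {f : Ω → ℝ}
    (hf : Integrable f μ) {s : Set Ω} (hs : MeasurableSet s) {a b : ℝ}
    (ha : ∀ ω ∈ s, f ω ≤ a) (hb : ∀ ω ∈ sᶜ, f ω ≤ b) :
    ∫ ω, f ω ∂μ ≤ a * μ.real s + b * μ.real sᶜ := by
  rw [← integral_add_compl hs hf]
  calc ∫ ω in s, f ω ∂μ + ∫ ω in sᶜ, f ω ∂μ ≤ ∫ _ in s, a ∂μ + ∫ _ in sᶜ, b ∂μ :=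
        add_le_add (setIntegral_mono_on hf.integrableOn (integrable_const a).integrableOn hs ha)
          (setIntegral_mono_on hf.integrableOn (integrable_const b).integrableOn hs.compl hb)
    _ = a * μ.real s + b * μ.real sᶜ := by
        rw [setIntegral_const, setIntegral_const, smul_eq_mul, smul_eq_mul, mul_comm a,
          mul_comm b]

lemma tendsto_measureReal_abs_lt_atTop (P : Measure Ω) [IsProbabilityMeasure P] (Y : Ω → ℝ) :
    Tendsto (fun r => P.real {ω | |Y ω| < r}) atTop (𝓝 1) := by
  have hmono : Monotone fun r : ℝ => {ω | |Y ω| < r} :=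
    fun r r' hr ω (hω : |Y ω| < r) => hω.trans_le hr
  have hunion : (⋃ r : ℝ, {ω | |Y ω| < r}) = Set.univ :=
    Set.eq_univ_of_forall fun ω => Set.mem_iUnion.2 ⟨|Y ω| + 1, lt_add_one |Y ω|⟩
  have := tendsto_measure_iUnion_atTop (μ := P) hmono
  rw [hunion, measure_univ] at this
  simpa only [measureReal_def, Function.comp_def, ENNReal.toReal_one] using
    (ENNReal.tendsto_toReal ENNReal.one_ne_top).comp this

end Probability

/-- for the Gaussian model on `Θ = ℝ × [σ̲², ∞)` and `B_{2,C} = {θ ∈ Θ : |μ| ≥ C}`,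
`E[sup_{θ ∈ B_{2,C}} log f_θ(Y)]` is bounded by
`-½ log(2πσ̲²) P(|Y| ≥ C/2) - ½ log(πC²/2) P(|Y| < C/2)`, and this bound tends to `-∞`
as `C → ∞`. -/
theorem stmt_6 {Ω : Type*} [MeasurableSpace Ω]
    (P : Measure Ω) [IsProbabilityMeasure P]
    (Y : Ω → ℝ) (hY : Measurable Y)
    (σlb : ℝ) (hσlb : 0 < σlb) :
    (∀ C : ℝ, 0 < C →
      ∫ ω, (⨆ θ : {θ : ℝ × ℝ // σlb ≤ θ.2 ∧ C ≤ |θ.1|},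
          Real.log (gaussDens θ.1.1 θ.1.2 (Y ω))) ∂P ≤
        -(1 / 2) * Real.log (2 * Real.pi * σlb) * (P {ω | C / 2 ≤ |Y ω|}).toReal
          - (1 / 2) * Real.log (Real.pi * C ^ 2 / 2) * (P {ω | |Y ω| < C / 2}).toReal) ∧
      Tendsto (fun C : ℝ =>
          -(1 / 2) * Real.log (2 * Real.pi * σlb) * (P {ω | C / 2 ≤ |Y ω|}).toReal
            - (1 / 2) * Real.log (Real.pi * C ^ 2 / 2) * (P {ω | |Y ω| < C / 2}).toReal)
        atTop atBot := by
  have hcompl (C : ℝ) : {ω | |Y ω| < C / 2} = {ω | C / 2 ≤ |Y ω|}ᶜ := by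
    ext ω
    exact (not_le (b := |Y ω|)).symm
  have hmeas_far (C : ℝ) : MeasurableSet {ω | C / 2 ≤ |Y ω|} :=
    measurableSet_le measurable_const hY.abs
  refine ⟨fun C hC => ?_, ?_⟩
  · rw [hcompl]
    refine (integral_le_of_le_of_le_compl (supLogGaussDens.integrable_comp hY hσlb) (hmeas_far C)
      (fun ω _ => supLogGaussDens.le_const hσlb (Y ω))
      (fun ω hω => supLogGaussDens.le_of_abs_lt hσlb hC (not_le.1 hω))).trans_eq ?_
    simp only [measureReal_def]
    ring
  · have hnear : Tendsto (fun C : ℝ => (P {ω | |Y ω| < C / 2}).toReal) atTop (𝓝 1) :=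
      (tendsto_measureReal_abs_lt_atTop P Y).comp (tendsto_id.atTop_div_const two_pos)
    have hfar_prob : Tendsto (fun C : ℝ => (P {ω | C / 2 ≤ |Y ω|}).toReal) atTop (𝓝 0) := by
      have := hnear.const_sub 1
      simp only [sub_self, hcompl, ← measureReal_def, probReal_compl_eq_one_sub (hmeas_far _),
        sub_sub_cancel] at this
      exact this
    have hlog : Tendsto (fun C : ℝ => 1 / 2 * Real.log (Real.pi * C ^ 2 / 2)) atTop atTop :=
      (Real.tendsto_log_atTop.comp (((tendsto_pow_atTop two_ne_zero).const_mul_atTop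
        Real.pi_pos).atTop_div_const two_pos)).const_mul_atTop one_half_pos
    simpa only [sub_eq_add_neg, Function.comp_apply] using (hfar_prob.const_mul _).add_atBot
      (tendsto_neg_atTop_atBot.comp (hlog.atTop_mul_pos one_pos hnear))
end

section
/- Let $C \geq 1$, $\alpha > 0$, $\varrho \in (0, \min(\alpha,1))$, $c \in (0,1)$, and let $(t_p)_{p\geq 0}$ be defined by $t_0 \in \mathbb{N}$ and $t_p = t_{p-1} + \lceil C_{p-1} \log(t_{p-1}) \vee C \rceil$ for $p \geq 1$, where $C_{p-1} \in [c\, t_{p-1}^{\varrho}, t_{p-1}^{\varrho}/c]$. Then $\limsup_{p\to\infty} \frac{t_{p+1} - t_p}{t_p - t_{p-1}} < \infty$. -/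
open Filter

/-- for the sequence `t_p = t_{p-1} + ⌈max(C_{p-1} log t_{p-1}, C)⌉` with
`C_{p-1} ∈ [c t_{p-1}^ϱ, t_{p-1}^ϱ / c]`, one has
`limsup_p (t_{p+1} - t_p)/(t_p - t_{p-1}) < ∞`. -/
theorem stmt_8 (C α ϱ c : ℝ) (hC : 1 ≤ C) (hα : 0 < α)
    (hϱ : 0 < ϱ) (hϱ' : ϱ < min α 1) (hc : c ∈ Set.Ioo (0 : ℝ) 1)
    (t : ℕ → ℕ) (ht0 : 1 ≤ t 0)
    (Cs : ℕ → ℝ)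
    (hCs : ∀ p : ℕ, 1 ≤ p →
      Cs (p - 1) ∈ Set.Icc (c * (t (p - 1) : ℝ) ^ ϱ) ((t (p - 1) : ℝ) ^ ϱ / c))
    (hrec : ∀ p : ℕ, 1 ≤ p →
      t p = t (p - 1) + ⌈max (Cs (p - 1) * Real.log (t (p - 1))) C⌉₊) :
    ∃ M : ℝ, ∀ᶠ p in atTop,
      ((t (p + 1) : ℝ) - (t p : ℝ)) / ((t p : ℝ) - (t (p - 1) : ℝ)) ≤ M := by
  obtain ⟨hc0, hc1⟩ := hc
  have hϱ1 : ϱ < 1 := lt_of_lt_of_le hϱ' (min_le_right _ _)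
  -- the sequence grows by at least 1 each step
  have hstep : ∀ p : ℕ, 1 ≤ p → t (p - 1) + 1 ≤ t p := by
    intro p hp
    rw [hrec p hp]
    have hpos : 0 < max (Cs (p - 1) * Real.log (t (p - 1))) C :=
      lt_of_lt_of_le (by linarith) (le_max_right _ _)
    have := Nat.one_le_ceil_iff.mpr hpos
    omega
  have hgrow : ∀ p : ℕ, p + 1 ≤ t p := by
    intro p
    induction p with
    | zero => simpa using ht0
    | succ n ih =>
      have h := hstep (n + 1) (by omega)
      simp only [Nat.add_sub_cancel] at h
      omega
  -- analytic eventuality : log x / x^(1-ϱ) < c/2 for large x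
  have hlog : Tendsto (fun x : ℝ => Real.log x / x ^ (1 - ϱ)) atTop (nhds 0) :=
    (isLittleO_log_rpow_atTop (by linarith)).tendsto_div_nhds_zero
  have hev : ∀ᶠ x : ℝ in atTop, Real.log x / x ^ (1 - ϱ) < c / 2 :=
    hlog.eventually_lt_const (by positivity)
  obtain ⟨T, hT⟩ := eventually_atTop.mp hev
  refine ⟨4 / c ^ 2 + C + 1, ?_⟩
  rw [eventually_atTop]
  refine ⟨max ⌈T⌉₊ (⌈2 * (C + 1)⌉₊ + 2), fun p hp => ?_⟩
  have hp1 : 1 ≤ p := by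
    have := le_max_right ⌈T⌉₊ (⌈2 * (C + 1)⌉₊ + 2); omega
  have hta : p ≤ t (p - 1) := by
    have := hgrow (p - 1); omega
  -- recursive identities
  have hDrec := hrec p hp1
  have hNrec := hrec (p + 1) (by omega)
  rw [Nat.add_sub_cancel] at hNrec
  have hCsa := hCs p hp1
  have hCsb := hCs (p + 1) (by omega)
  rw [Nat.add_sub_cancel] at hCsb
  obtain ⟨hCsa1, hCsa2⟩ := hCsa
  obtain ⟨hCsb1, hCsb2⟩ := hCsb
  set a : ℝ := (t (p - 1) : ℝ) with ha_def
  set b : ℝ := (t p : ℝ) with hb_def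
  set Dn : ℕ := ⌈max (Cs (p - 1) * Real.log a) C⌉₊ with hDn_def
  set Nn : ℕ := ⌈max (Cs p * Real.log b) C⌉₊ with hNn_def
  -- basic facts about a
  have hpa : (p : ℝ) ≤ a := by rw [ha_def]; exact_mod_cast hta
  have haT : T ≤ a := by
    have h1 : (⌈T⌉₊ : ℝ) ≤ (p : ℝ) := by
      exact_mod_cast le_trans (le_max_left _ _) hp
    exact le_trans (Nat.le_ceil T) (le_trans h1 hpa)
  have ha2C : 2 * (C + 1) ≤ a := by
    have h1 : (⌈2 * (C + 1)⌉₊ : ℝ) ≤ (p : ℝ) := by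
      have : ⌈2 * (C + 1)⌉₊ ≤ p := by
        have := le_max_right ⌈T⌉₊ (⌈2 * (C + 1)⌉₊ + 2); omega
      exact_mod_cast this
    exact le_trans (Nat.le_ceil _) (le_trans h1 hpa)
  have ha2 : 2 ≤ a := by
    have h2 : ((2 : ℕ) : ℝ) ≤ (p : ℝ) := by
      have : 2 ≤ p := by
        have := le_max_right ⌈T⌉₊ (⌈2 * (C + 1)⌉₊ + 2); omega
      exact_mod_cast this
    push_cast at h2; linarith
  have h0a : (0 : ℝ) < a := by linarith
  have hla0 : 0 ≤ Real.log a := Real.log_nonneg (by linarith)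
  have haϱ : 0 < a ^ ϱ := Real.rpow_pos_of_pos h0a ϱ
  -- key log bound at a
  have hkey : a ^ ϱ * Real.log a ≤ c / 2 * a := by
    have h1 : Real.log a / a ^ (1 - ϱ) ≤ c / 2 := (hT a haT).le
    have h3 : 0 < a ^ (1 - ϱ) := Real.rpow_pos_of_pos h0a _
    have h2 : a ^ (1 - ϱ) * a ^ ϱ = a := by
      rw [← Real.rpow_add h0a]; norm_num
    have h4 : Real.log a ≤ c / 2 * a ^ (1 - ϱ) := by
      rw [div_le_iff₀ h3] at h1; linarith
    calc a ^ ϱ * Real.log a ≤ a ^ ϱ * (c / 2 * a ^ (1 - ϱ)) :=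
          mul_le_mul_of_nonneg_left h4 haϱ.le
      _ = c / 2 * (a ^ (1 - ϱ) * a ^ ϱ) := by ring
      _ = c / 2 * a := by rw [h2]
  have hCsa0 : 0 ≤ Cs (p - 1) := le_trans (by positivity) hCsa1
  -- denominator bounds
  have hDC : C ≤ (Dn : ℝ) := le_trans (le_max_right _ _) (Nat.le_ceil _)
  have hD1 : 1 ≤ (Dn : ℝ) := le_trans hC hDC
  have hDlow : c * a ^ ϱ * Real.log a ≤ (Dn : ℝ) := by
    have h1 : c * a ^ ϱ * Real.log a ≤ Cs (p - 1) * Real.log a :=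
      mul_le_mul_of_nonneg_right hCsa1 hla0
    exact le_trans h1 (le_trans (le_max_left _ _) (Nat.le_ceil _))
  have hA0 : 0 ≤ Cs (p - 1) * Real.log a := mul_nonneg hCsa0 hla0
  have hDup : (Dn : ℝ) ≤ a ^ ϱ / c * Real.log a + C + 1 := by
    have h1 : (Dn : ℝ) < max (Cs (p - 1) * Real.log a) C + 1 :=
      Nat.ceil_lt_add_one (le_trans (by linarith) (le_max_right _ _))
    have h2 : max (Cs (p - 1) * Real.log a) C ≤ Cs (p - 1) * Real.log a + C :=
      max_le (by linarith) (by linarith)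
    have h3 : Cs (p - 1) * Real.log a ≤ a ^ ϱ / c * Real.log a :=
      mul_le_mul_of_nonneg_right hCsa2 hla0
    linarith
  -- b = a + Dn and b ≤ 2a
  have hb_eq : b = a + (Dn : ℝ) := by
    rw [hb_def, ha_def, hDrec]; push_cast; ring
  have hb2a : b ≤ 2 * a := by
    have h1 : a ^ ϱ / c * Real.log a ≤ a / 2 := by
      rw [div_mul_eq_mul_div, div_le_iff₀ hc0]
      have heq : a / 2 * c = c / 2 * a := by ring
      linarith
    linarith
  have hab : a ≤ b := by linarith
  have h0b : (0 : ℝ) < b := by linarith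
  have hlb0 : 0 ≤ Real.log b := Real.log_nonneg (by linarith)
  have hbϱ0 : 0 ≤ b ^ ϱ := (Real.rpow_pos_of_pos h0b ϱ).le
  have hbϱ : b ^ ϱ ≤ 2 * a ^ ϱ := by
    calc b ^ ϱ ≤ (2 * a) ^ ϱ := Real.rpow_le_rpow h0b.le hb2a hϱ.le
      _ = (2 : ℝ) ^ ϱ * a ^ ϱ := Real.mul_rpow (by norm_num) h0a.le
      _ ≤ (2 : ℝ) ^ (1 : ℝ) * a ^ ϱ :=
          mul_le_mul_of_nonneg_right
            (Real.rpow_le_rpow_of_exponent_le (by norm_num) hϱ1.le) haϱ.le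
      _ = 2 * a ^ ϱ := by rw [Real.rpow_one]
  have hlb : Real.log b ≤ 2 * Real.log a := by
    have h1 : Real.log b ≤ Real.log (2 * a) := Real.log_le_log h0b hb2a
    have h2 : Real.log (2 * a) = Real.log 2 + Real.log a :=
      Real.log_mul two_ne_zero (ne_of_gt h0a)
    have h3 : Real.log 2 ≤ Real.log a := Real.log_le_log (by norm_num) ha2
    linarith
  -- numerator bounds
  have hCsb0 : 0 ≤ Cs p := le_trans (by positivity) hCsb1
  have hB0 : 0 ≤ Cs p * Real.log b := mul_nonneg hCsb0 hlb0
  have hNup : (Nn : ℝ) ≤ b ^ ϱ / c * Real.log b + C + 1 := by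
    have h1 : (Nn : ℝ) < max (Cs p * Real.log b) C + 1 :=
      Nat.ceil_lt_add_one (le_trans (by linarith) (le_max_right _ _))
    have h2 : max (Cs p * Real.log b) C ≤ Cs p * Real.log b + C :=
      max_le (by linarith) (by linarith)
    have h3 : Cs p * Real.log b ≤ b ^ ϱ / c * Real.log b :=
      mul_le_mul_of_nonneg_right hCsb2 hlb0
    linarith
  have hprod : b ^ ϱ * Real.log b ≤ 4 * (a ^ ϱ * Real.log a) := by
    have h1 := mul_le_mul hbϱ hlb hlb0 (by positivity : (0 : ℝ) ≤ 2 * a ^ ϱ)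
    have heq : 2 * a ^ ϱ * (2 * Real.log a) = 4 * (a ^ ϱ * Real.log a) := by ring
    linarith
  have hNup2 : (Nn : ℝ) ≤ 4 / c * (a ^ ϱ * Real.log a) + C + 1 := by
    have h4 : b ^ ϱ / c * Real.log b ≤ 4 / c * (a ^ ϱ * Real.log a) := by
      calc b ^ ϱ / c * Real.log b = (b ^ ϱ * Real.log b) / c := by ring
        _ ≤ (4 * (a ^ ϱ * Real.log a)) / c := by gcongr
        _ = 4 / c * (a ^ ϱ * Real.log a) := by ring
    linarith
  -- final combination
  have hfin : (Nn : ℝ) ≤ (4 / c ^ 2 + C + 1) * (Dn : ℝ) := by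
    have k1 : 4 / c * (a ^ ϱ * Real.log a) ≤ 4 / c ^ 2 * (Dn : ℝ) := by
      have h1 := mul_le_mul_of_nonneg_left hDlow
        (by positivity : (0 : ℝ) ≤ 4 / c ^ 2)
      have heq : 4 / c ^ 2 * (c * a ^ ϱ * Real.log a)
          = 4 / c * (a ^ ϱ * Real.log a) := by
        field_simp
      linarith
    have k2 : C + 1 ≤ (C + 1) * (Dn : ℝ) :=
      le_mul_of_one_le_right (by linarith) hD1
    have expand : (4 / c ^ 2 + C + 1) * (Dn : ℝ)
        = 4 / c ^ 2 * (Dn : ℝ) + (C + 1) * (Dn : ℝ) := by ring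
    linarith
  -- conclude
  have hnum : (t (p + 1) : ℝ) - b = (Nn : ℝ) := by
    rw [hNrec]; push_cast; ring
  have hden : b - a = (Dn : ℝ) := by rw [hb_eq]; ring
  rw [hnum, hden, div_le_iff₀ (by linarith : (0 : ℝ) < (Dn : ℝ))]
  exact hfin
end

section
/- Let $(U_t)_{t \geq 1}$ be independent $\mathbb{R}^d$-valued random vectors where each $U_t = h_t \tilde{U}_t$ with $\tilde{U}_t$ having a density bounded below by $c_1 > 0$ on the unit ball (uniformly in $t$), and $h_t \in (0, 1]$. Fix integers $a < b$ and $\delta_p > 0$ with $\delta_p / h_t \leq 1$ for all relevant $t$. Then $\mathbb{P}\Big(\big\|\sum_{j=s}^{b-1} U_j\big\|_\infty < d^{-1/2}\delta_p \text{ for all } s \in \{a+1, \dots, b-1\}\Big) \geq \prod_{s=a+1}^{b-1} \big(c_2\, (\delta_p/h_s)^d \wedge 1\big)$ for some constant $c_2 > 0$ depending only on $c_1$ and $d$. -/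
/-!
Write `S t = ∑_{t ≤ j < b} h_j U_j` and let `E s` be the event that `‖S t‖_∞ < r` for all
`s ≤ t < b`, where `r = d^{-1/2} δ_p`. Then `E s = {‖h_s U_s + S (s+1)‖_∞ < r} ∩ E (s+1)`, and
`S (s+1)` and `E (s+1)` are functions of `(U_j)_{j > s}`, which is independent of `U_s`. For a fixed
value `y` of `S (s+1)` with `‖y‖_∞ < r`, the sup-norm box of half-width `r / (2 h_s)` around
`-y / (2 h_s)` lies in `{u | ‖h_s u + y‖_∞ < r}` and, since `√d r ≤ h_s`, in the Euclidean unit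
ball, where the law of `U_s` dominates `c₁ · volume`. Hence `P (E s) ≥ c₁ (r / h_s)^d P (E (s+1))`,
and downward induction on `s` gives the product.
-/

open MeasureTheory ProbabilityTheory Finset
open scoped ENNReal

lemma EuclideanSpace.norm_le_sqrt_card_mul {ι : Type*} [Fintype ι] (x : EuclideanSpace ℝ ι)
    {C : ℝ} (hC : 0 ≤ C) (hx : ∀ i, |x i| ≤ C) : ‖x‖ ≤ √(Fintype.card ι) * C := by
  rw [EuclideanSpace.norm_eq, ← Real.sqrt_sq hC, ← Real.sqrt_mul (Nat.cast_nonneg _)]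
  gcongr
  calc ∑ i, ‖x i‖ ^ 2 ≤ ∑ _i : ι, C ^ 2 :=
        sum_le_sum fun i _ => pow_le_pow_left₀ (norm_nonneg _) (hx i) 2
    _ = Fintype.card ι * C ^ 2 := by simp

lemma EuclideanSpace.volume_preimage_ofLp_ball {ι : Type*} [Fintype ι] (m : ι → ℝ) {w : ℝ}
    (hw : 0 < w) :
    volume (WithLp.ofLp ⁻¹' Metric.ball m w : Set (EuclideanSpace ℝ ι)) =
      ENNReal.ofReal ((2 * w) ^ Fintype.card ι) := by
  rw [(PiLp.volume_preserving_ofLp ι).measure_preimage measurableSet_ball.nullMeasurableSet,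
    Real.volume_pi_ball m hw]

lemma MeasureTheory.Measure.smul_restrict_le_withDensity {α : Type*} [MeasurableSpace α]
    {μ : Measure α} {s : Set α} (hs : MeasurableSet s) {c : ℝ≥0∞} {ρ : α → ℝ≥0∞}
    (hρ : ∀ x ∈ s, c ≤ ρ x) : c • μ.restrict s ≤ μ.withDensity ρ := by
  rw [← withDensity_const, ← withDensity_indicator hs]
  refine withDensity_mono (ae_of_all _ fun x => ?_)
  by_cases hx : x ∈ s
  · simpa [hx] using hρ x hx
  · simp [hx]

lemma le_measure_setOf_abs_mul_add_lt {d : ℕ} {ν : Measure (EuclideanSpace ℝ (Fin d))}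
    {c : ℝ≥0∞} (hν : c • volume.restrict (Metric.closedBall 0 1) ≤ ν) {h r : ℝ} (hh : 0 < h)
    (hr : 0 < r) (hrh : √d * r ≤ h) {y : EuclideanSpace ℝ (Fin d)} (hy : ∀ i, |y i| < r) :
    c * ENNReal.ofReal ((r / h) ^ d) ≤ ν {u | ∀ i, |h * u i + y i| < r} := by
  set w := r / (2 * h)
  have hw : 0 < w := by positivity
  set box : Set (EuclideanSpace ℝ (Fin d)) :=
    WithLp.ofLp ⁻¹' Metric.ball (fun i => -y i / (2 * h)) w
  have mem_box {u} (hu : u ∈ box) (i : Fin d) : |u i + y i / (2 * h)| < w := by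
    have := (dist_pi_lt_iff hw).1 (Metric.mem_ball.1 hu) i
    simpa [Real.dist_eq, neg_div] using this
  have box_subset : box ⊆ {u | ∀ i, |h * u i + y i| < r} := by
    intro u hu i
    have hy2 := abs_lt.1 (hy i)
    have hu2 := abs_lt.1 (mem_box hu i)
    have : h * u i + y i = h * (u i + y i / (2 * h)) + y i / 2 := by field_simp; ring
    rw [this, abs_lt]
    constructor <;> nlinarith [show h * w = r / 2 by simp only [w]; field_simp]
  have box_subset_ball : box ⊆ Metric.closedBall 0 1 := by
    intro u hu
    have coord_le (i : Fin d) : |u i| ≤ r / h := by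
      calc |u i| ≤ |u i + y i / (2 * h)| + |y i / (2 * h)| := by
            simpa using abs_sub (u i + y i / (2 * h)) (y i / (2 * h))
        _ ≤ w + r / (2 * h) := by
          rw [abs_div, abs_of_pos (by positivity : 0 < 2 * h)]
          gcongr
          exacts [(mem_box hu i).le, (hy i).le]
        _ = r / h := by simp only [w]; field_simp; ring
    rw [mem_closedBall_zero_iff]
    calc ‖u‖ ≤ √d * (r / h) := by
          simpa using EuclideanSpace.norm_le_sqrt_card_mul u (by positivity) coord_le
      _ ≤ 1 := by rw [mul_div_assoc', div_le_one hh]; exact hrh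
  calc c * ENNReal.ofReal ((r / h) ^ d)
      = c * volume box := by
        rw [EuclideanSpace.volume_preimage_ofLp_ball _ hw, Fintype.card_fin]
        congr 3
        simp only [w]; field_simp
    _ = (c • volume.restrict (Metric.closedBall 0 1)) box := by
        rw [Measure.smul_apply, Measure.restrict_eq_self _ box_subset_ball, smul_eq_mul]
    _ ≤ ν box := hν box
    _ ≤ ν {u | ∀ i, |h * u i + y i| < r} := measure_mono box_subset

lemma ProbabilityTheory.IndepFun.mul_measure_le_measure_preimage_prodMk {Ω α β : Type*}
    [MeasurableSpace Ω] [MeasurableSpace α] [MeasurableSpace β] {μ : Measure Ω}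
    [IsFiniteMeasure μ] {X : Ω → α} {Y : Ω → β} (hXY : IndepFun X Y μ) (hX : Measurable X)
    (hY : Measurable Y) {C : Set (α × β)} (hC : MeasurableSet C) {B : Set β}
    (hB : MeasurableSet B) {K : ℝ≥0∞} (hK : ∀ y ∈ B, K ≤ μ.map X ((·, y) ⁻¹' C)) :
    K * μ (Y ⁻¹' B) ≤ μ ((fun ω => (X ω, Y ω)) ⁻¹' C) := by
  rw [← Measure.map_apply hY hB, ← Measure.map_apply (hX.prodMk hY) hC,
    (indepFun_iff_map_prod_eq_prod_map_map hX.aemeasurable hY.aemeasurable).1 hXY,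
    Measure.prod_apply_symm hC, ← lintegral_indicator_const hB]
  refine lintegral_mono fun y => ?_
  by_cases hy : y ∈ B
  · simpa [hy] using hK y hy
  · simp [hy]

section TailSums

variable {Ω : Type*} {d : ℕ}

def smallTailSums (h : ℕ → ℝ) (U : ℕ → Ω → EuclideanSpace ℝ (Fin d)) (b : ℕ) (r : ℝ) (s : ℕ) :
    Set Ω :=
  {ω | ∀ t ∈ Ico s b, ∀ i, |(∑ j ∈ Ico t b, h j • U j ω) i| < r}

def tailSums (h : ℕ → ℝ) (U : ℕ → Ω → EuclideanSpace ℝ (Fin d)) (b s : ℕ) (ω : Ω)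
    (t : {t // s < t}) : EuclideanSpace ℝ (Fin d) :=
  ∑ j ∈ Ico (t : ℕ) b, h j • U j ω

variable (h : ℕ → ℝ) (U : ℕ → Ω → EuclideanSpace ℝ (Fin d)) {b : ℕ} {r : ℝ} {s : ℕ}

lemma smallTailSums_of_le (hbs : b ≤ s) : smallTailSums h U b r s = Set.univ := by
  ext ω
  simp [smallTailSums, Ico_eq_empty_of_le hbs]

lemma smallTailSums_eq_inter (hsb : s < b) :
    smallTailSums h U b r s =
      {ω | ∀ i, |h s * U s ω i + (∑ j ∈ Ico (s + 1) b, h j • U j ω) i| < r} ∩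
        smallTailSums h U b r (s + 1) := by
  ext ω
  simp [smallTailSums, ← insert_Ico_add_one_left_eq_Ico hsb]

lemma smallTailSums_succ_eq_preimage (hr : 0 < r) :
    smallTailSums h U b r (s + 1) = tailSums h U b s ⁻¹' {v | ∀ t i, |v t i| < r} := by
  ext ω
  simp only [smallTailSums, tailSums, Set.mem_preimage, Set.mem_ofPred_eq, mem_Ico, Subtype.forall]
  refine ⟨fun hω t hst i => ?_, fun hω t ht i => hω t ht.1 i⟩
  rcases lt_or_ge t b with htb | hbt
  · exact hω t ⟨hst, htb⟩ i
  · simpa [Ico_eq_empty_of_le hbt] using hr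

lemma measurable_tailSums {m : MeasurableSpace Ω} (hU : ∀ j, s < j → Measurable (U j)) :
    Measurable (tailSums h U b s) :=
  measurable_pi_lambda _ fun t => Finset.measurable_sum _ fun j hj =>
    (hU j (t.2.trans_le (mem_Ico.1 hj).1)).const_smul (h j)

variable [MeasurableSpace Ω] {P : Measure Ω}

lemma ProbabilityTheory.iIndepFun.indepFun_tailSums (hU : ∀ t, Measurable (U t))
    (hind : iIndepFun U P) : IndepFun (U s) (tailSums h U b s) P := by
  have hindep := indep_iSup_of_disjoint (fun j => (hU j).comap_le) hind.iIndep
    (Set.disjoint_singleton_left.2 (lt_irrefl s) : Disjoint {s} (Set.Ioi s))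
  rw [_root_.iSup_singleton] at hindep
  let mTail : MeasurableSpace Ω := ⨆ j ∈ Set.Ioi s, MeasurableSpace.comap (U j) inferInstance
  have hU_tail {j : ℕ} (hj : s < j) : Measurable[mTail] (U j) :=
    (comap_measurable (U j)).mono
      (le_iSup₂ (f := fun j (_ : j ∈ Set.Ioi s) => MeasurableSpace.comap (U j) _) j hj) le_rfl
  exact (IndepFun_iff_Indep _ _ _).2 <| indep_of_indep_of_le_right hindep
    (measurable_tailSums (m := mTail) h U fun _ => hU_tail).comap_le

lemma mul_measure_smallTailSums_succ_le [IsFiniteMeasure P] (hU : ∀ t, Measurable (U t))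
    (hind : iIndepFun U P) {c : ℝ≥0∞}
    (hlaw : c • volume.restrict (Metric.closedBall 0 1) ≤ P.map (U s))
    (hh : 0 < h s) (hr : 0 < r) (hrh : √d * r ≤ h s) (hsb : s < b) :
    c * ENNReal.ofReal ((r / h s) ^ d) * P (smallTailSums h U b r (s + 1)) ≤
      P (smallTailSums h U b r s) := by
  -- `B` also bounds the empty sums `t ≥ b`, so that every slice of `C` over `B` is a small ball
  -- around a point of sup-norm `< r`, even when `s + 1 = b`.
  set B : Set ({t // s < t} → EuclideanSpace ℝ (Fin d)) := {v | ∀ t i, |v t i| < r}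
  set C : Set (EuclideanSpace ℝ (Fin d) × ({t // s < t} → EuclideanSpace ℝ (Fin d))) :=
    {p | (∀ i, |h s * p.1 i + p.2 ⟨s + 1, s.lt_add_one⟩ i| < r) ∧ p.2 ∈ B}
  have hB : MeasurableSet B := by
    simp only [B, Set.ofPred_forall]
    exact MeasurableSet.iInter fun t => MeasurableSet.iInter fun i =>
      measurableSet_lt (by fun_prop) measurable_const
  have hC : MeasurableSet C := by
    simp only [C, Set.ofPred_and, Set.ofPred_forall]
    refine .inter (MeasurableSet.iInter fun i => measurableSet_lt (by fun_prop) measurable_const)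
      (measurable_snd hB)
  have hE : smallTailSums h U b r s = (fun ω => (U s ω, tailSums h U b s ω)) ⁻¹' C := by
    rw [smallTailSums_eq_inter h U hsb, smallTailSums_succ_eq_preimage h U hr]
    rfl
  rw [hE, smallTailSums_succ_eq_preimage h U hr]
  refine (hind.indepFun_tailSums h U hU).mul_measure_le_measure_preimage_prodMk (hU s)
    (measurable_tailSums h U fun j _ => hU j) hC hB fun y hy => ?_
  have hslice : (·, y) ⁻¹' C = {x | ∀ i, |h s * x i + y ⟨s + 1, s.lt_add_one⟩ i| < r} := by
    ext x
    simp [C, hy]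
  rw [hslice]
  exact le_measure_setOf_abs_mul_add_lt hlaw hh hr hrh (hy _)

theorem prod_le_measure_smallTailSums [IsProbabilityMeasure P] (hU : ∀ t, Measurable (U t))
    (hind : iIndepFun U P) {c : ℝ≥0∞}
    (hlaw : ∀ t ∈ Ico s b, c • volume.restrict (Metric.closedBall 0 1) ≤ P.map (U t))
    (hh : ∀ t ∈ Ico s b, 0 < h t) (hr : 0 < r) (hrh : ∀ t ∈ Ico s b, √d * r ≤ h t) :
    ∏ t ∈ Ico s b, c * ENNReal.ofReal ((r / h t) ^ d) ≤ P (smallTailSums h U b r s) := by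
  obtain ⟨n, hn⟩ : ∃ n, b - s = n := ⟨_, rfl⟩
  induction n generalizing s with
  | zero =>
    rw [Ico_eq_empty_of_le (by omega), smallTailSums_of_le h U (by omega)]
    simp
  | succ n ih =>
    have hsb : s < b := by omega
    have hs : s ∈ Ico s b := mem_Ico.2 ⟨le_rfl, hsb⟩
    have hsub : Ico (s + 1) b ⊆ Ico s b := Ico_subset_Ico_left s.le_succ
    rw [← insert_Ico_add_one_left_eq_Ico hsb, prod_insert (by simp)]
    calc c * ENNReal.ofReal ((r / h s) ^ d) *
          ∏ t ∈ Ico (s + 1) b, c * ENNReal.ofReal ((r / h t) ^ d)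
        ≤ c * ENNReal.ofReal ((r / h s) ^ d) * P (smallTailSums h U b r (s + 1)) := by
          gcongr
          exact ih (fun t ht => hlaw t (hsub ht)) (fun t ht => hh t (hsub ht))
            (fun t ht => hrh t (hsub ht)) (by omega)
      _ ≤ P (smallTailSums h U b r s) :=
          mul_measure_smallTailSums_succ_le h U hU hind (hlaw s hs) (hh s hs) hr (hrh s hs) hsb

end TailSums

/-- small-ball lower bound: if `U_t = h_t Ũ_t` with the `Ũ_t` independent, each
having a Lebesgue density bounded below by `c₁` on the (Euclidean) unit ball, `h_t ∈ (0,1]`,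
and `δ_p/h_t ≤ 1` on the relevant range, then there is `c₂ > 0` (depending only on `c₁` and `d`)
such that
`P(‖∑_{j=s}^{b-1} U_j‖_∞ < d^{-1/2} δ_p for all a < s < b) ≥ ∏_{s=a+1}^{b-1} (c₂ (δ_p/h_s)^d ∧ 1)`. -/
theorem stmt_18 {Ω : Type*} [MeasurableSpace Ω]
    (P : Measure Ω) [IsProbabilityMeasure P]
    (d : ℕ) (hd : 0 < d) (c1 : ℝ) (hc1 : 0 < c1) :
    ∃ c2 : ℝ, 0 < c2 ∧
      ∀ (h : ℕ → ℝ) (Ut : ℕ → Ω → EuclideanSpace ℝ (Fin d))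
        (ρ : ℕ → EuclideanSpace ℝ (Fin d) → ℝ≥0∞) (a b : ℕ) (δp : ℝ),
        (∀ t, h t ∈ Set.Ioc (0 : ℝ) 1) →
        (∀ t, Measurable (Ut t)) →
        iIndepFun Ut P →
        (∀ t, Measure.map (Ut t) P = volume.withDensity (ρ t)) →
        (∀ t (x : EuclideanSpace ℝ (Fin d)), ‖x‖ ≤ 1 → ENNReal.ofReal c1 ≤ ρ t x) →
        a < b → 0 < δp →
        (∀ t ∈ Finset.Ioo a b, δp / h t ≤ 1) →
        ENNReal.ofReal (∏ s ∈ Finset.Ioo a b, min (c2 * (δp / h s) ^ d) 1) ≤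
          P {ω | ∀ s ∈ Finset.Ioo a b, ∀ i : Fin d,
            |(∑ j ∈ Finset.Ico s b, h j • Ut j ω) i| < (d : ℝ) ^ (-(1 : ℝ) / 2) * δp} := by
  refine ⟨c1 * ((d : ℝ) ^ (-(1 : ℝ) / 2)) ^ d, by positivity, ?_⟩
  intro h Ut ρ a b δp hh hUm hind hmap hρ hab hδ hδh
  set r := (d : ℝ) ^ (-(1 : ℝ) / 2) * δp
  have hsr : √d * r = δp := by
    rw [← mul_assoc, Real.sqrt_eq_rpow, ← Real.rpow_add (by positivity)]
    norm_num
  have hlaw (t : ℕ) :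
      ENNReal.ofReal c1 • volume.restrict (Metric.closedBall 0 1) ≤ P.map (Ut t) :=
    hmap t ▸ Measure.smul_restrict_le_withDensity Metric.isClosed_closedBall.measurableSet
      fun x hx => hρ t x (mem_closedBall_zero_iff.1 hx)
  have hrh : ∀ t ∈ Ico (a + 1) b, √d * r ≤ h t := fun t ht => by
    rw [hsr, ← div_le_one (hh t).1]
    exact hδh t (Ico_add_one_left_eq_Ioo a b ▸ ht)
  calc ENNReal.ofReal
        (∏ s ∈ Ioo a b, min (c1 * ((d : ℝ) ^ (-(1 : ℝ) / 2)) ^ d * (δp / h s) ^ d) 1)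
      ≤ ENNReal.ofReal (∏ s ∈ Ioo a b, c1 * (r / h s) ^ d) := by
        refine ENNReal.ofReal_le_ofReal (prod_le_prod (fun s _ => ?_) fun s _ => ?_)
        · exact le_min (by have := (hh s).1; positivity) zero_le_one
        · rw [mul_assoc, ← mul_pow, mul_div_assoc]
          exact min_le_left _ _
    _ = ∏ s ∈ Ico (a + 1) b, ENNReal.ofReal c1 * ENNReal.ofReal ((r / h s) ^ d) := by
        rw [ENNReal.ofReal_prod_of_nonneg fun s _ => by have := (hh s).1; positivity,
          Ico_add_one_left_eq_Ioo]
        simp_rw [ENNReal.ofReal_mul hc1.le]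
    _ ≤ P (smallTailSums h Ut b r (a + 1)) :=
        prod_le_measure_smallTailSums h Ut hUm hind (fun t _ => hlaw t) (fun t _ => (hh t).1)
          (by positivity) hrh
    _ = _ := by rw [smallTailSums, Ico_add_one_left_eq_Ioo]
end
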